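/- Let k ≥ 1 and let c^(0), c^(1), …, c^(k) be compositions (possibly empty) with c^(k) nonempty. Then for every permutation τ of {1,…,k−1}, P(c^(0) ⊕ (3) ⊕ c^(1) ⊕ (3) ⊕ ⋯ ⊕ (3) ⊕ c^(k−1) ⊕ (3) ⊕ c^(k)) = P(c^(0) ⊕ (3) ⊕ c^(τ(1)) ⊕ (3) ⊕ ⋯ ⊕ (3) ⊕ c^(τ(k−1)) ⊕ (3) ⊕ c^(k)); that is, the value of P is unchanged when the middle factors c^(1), …, c^(k−1) are permuted arbitrarily. -/

import Mathlib

/-!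
Cut a permutation of `[n]` after position `p = |a| + 1`. The peak set of `a ⊕ (3) ⊕ b` contains
`p - 1` and `p + 2`, and adjacent positions are never both peaks, so there are no peaks at `p` and
`p + 1`. The peak condition therefore splits into independent conditions on the relative orders
of the two blocks, namely the peak sets of `a ⊕ (1)` and `(2) ⊕ b`, while the set of values taken
on the first block is arbitrary: `P(a ⊕ (3) ⊕ b) = C(n, p) P(a ⊕ (1)) P((2) ⊕ b)`. Normalised by `n!`,
`P` is thus multiplicative across each part `(3)`, and the chain factors into one term for
`c^(0)`, one for each middle `c^(i)` and one for `c^(k)`. Permuting the middle factors permutes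
this product and preserves the size of the composition.
-/

/-- `i` (1-based, with `1 < i < n`) is a peak of the permutation `σ` of `{1,…,n}`
(represented as a permutation of `Fin n`, position `j` (1-based) being index `j-1`). -/
def IsPeak {n : ℕ} (σ : Equiv.Perm (Fin n)) (i : ℕ) : Prop :=
  ∃ (h₂ : 2 ≤ i) (h₃ : i < n),
    σ ⟨i - 2, by omega⟩ < σ ⟨i - 1, by omega⟩ ∧ σ ⟨i, h₃⟩ < σ ⟨i - 1, by omega⟩

open Classical in
/-- The peak set of a permutation of `{1,…,n}` (as a set of 1-based positions). -/
noncomputable def peakSet {n : ℕ} (σ : Equiv.Perm (Fin n)) : Finset ℕ :=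
  (Finset.range n).filter (fun i => IsPeak σ i)

/-- `P(S;n)`: the number of permutations of `{1,…,n}` with peak set `S`. -/
noncomputable def numPeakSet (n : ℕ) (S : Finset ℕ) : ℕ :=
  Nat.card {σ : Equiv.Perm (Fin n) // peakSet σ = S}

/-- `c` is a composition of `n`: a list of positive integers summing to `n`. -/
def IsComposition (n : ℕ) (c : List ℕ) : Prop :=
  (∀ x ∈ c, 0 < x) ∧ c.sum = n

/-- The set `S(c)` of proper partial sums of the composition `c`. -/
def compPeaks (c : List ℕ) : Finset ℕ :=
  (Finset.range (c.length - 1)).image (fun i => (c.take (i + 1)).sum)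

/-- `P(c)`: the number of permutations of `{1,…,|c|}` whose peak set is `S(c)`. -/
noncomputable def Pcomp (c : List ℕ) : ℕ :=
  numPeakSet c.sum (compPeaks c)

/-- A composition is maximal if `P(b) ≤ P(c)` for every composition `b` of the same size. -/
def IsMaximal (c : List ℕ) : Prop :=
  ∀ b : List ℕ, IsComposition c.sum b → Pcomp b ≤ Pcomp c

/-- `chain3 c k = c 0 ⊕ (3) ⊕ c 1 ⊕ (3) ⊕ ⋯ ⊕ (3) ⊕ c k`. -/
def chain3 (c : ℕ → List ℕ) : ℕ → List ℕ
  | 0 => c 0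
  | k + 1 => chain3 c k ++ [3] ++ c (k + 1)

open Finset Equiv

section Peaks

variable {n : ℕ} {σ : Perm (Fin n)}

theorem IsPeak.two_le {i : ℕ} (h : IsPeak σ i) : 2 ≤ i := h.1

theorem IsPeak.lt {i : ℕ} (h : IsPeak σ i) : i < n := h.2.1

theorem isPeak_iff {i : ℕ} (h2 : 2 ≤ i) (hi : i < n) :
    IsPeak σ i ↔ σ ⟨i - 2, by omega⟩ < σ ⟨i - 1, by omega⟩ ∧ σ ⟨i, hi⟩ < σ ⟨i - 1, by omega⟩ := by
  simp [IsPeak, h2, hi]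

theorem mem_peakSet {i : ℕ} : i ∈ peakSet σ ↔ IsPeak σ i := by
  classical
  simpa [peakSet] using fun h => h.lt

theorem IsPeak.not_isPeak_add_one {i : ℕ} (h : IsPeak σ i) : ¬ IsPeak σ (i + 1) := by
  rintro ⟨_, hn, hup, _⟩
  obtain ⟨h2, _, _, hdown⟩ := h
  have : (⟨i + 1 - 2, by omega⟩ : Fin n) = ⟨i - 1, by omega⟩ := Fin.ext (by dsimp only; omega)
  rw [this] at hup
  exact lt_asymm hup hdown

theorem isPeak_add_iff_of_strictMono {m d : ℕ} {α : Perm (Fin m)} {f : Fin m → Fin n}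
    (hf : StrictMono f) (hdm : d + m ≤ n) (hσ : ∀ j : Fin m, σ ⟨d + j, by omega⟩ = f (α j))
    {i : ℕ} (hi : 2 ≤ i) (him : i < m) : IsPeak σ (d + i) ↔ IsPeak α i := by
  have hσ' : ∀ (j : ℕ) (hj : j < m) (l : ℕ) (hl : l < n), l = d + j →
      σ ⟨l, hl⟩ = f (α ⟨j, hj⟩) := by
    rintro j hj _ hl rfl
    exact hσ ⟨j, hj⟩
  rw [isPeak_iff (by omega) (by omega), isPeak_iff hi him,
    hσ' (i - 2) (by omega) _ _ (by omega), hσ' (i - 1) (by omega) _ _ (by omega),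
    hσ' i him _ _ rfl, hf.lt_iff_lt, hf.lt_iff_lt]

end Peaks

section Shuffle

variable {p q : ℕ}

theorem card_compl_of_card_eq {A : Finset (Fin (p + q))} (hA : #A = p) : #Aᶜ = q := by
  rw [card_compl, hA, Fintype.card_fin, Nat.add_sub_cancel_left]

def shuffleFun (A : Finset (Fin (p + q))) (hA : #A = p) (α : Perm (Fin p)) (β : Perm (Fin q)) :
    Fin (p + q) → Fin (p + q) :=
  Fin.append (fun j => A.orderEmbOfFin hA (α j))
    (fun j => Aᶜ.orderEmbOfFin (card_compl_of_card_eq hA) (β j))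

theorem shuffleFun_injective (A : Finset (Fin (p + q))) (hA : #A = p) (α : Perm (Fin p))
    (β : Perm (Fin q)) : Function.Injective (shuffleFun A hA α β) := by
  intro x y h
  induction x using Fin.addCases <;> induction y using Fin.addCases <;>
    simp only [shuffleFun, Fin.append_left, Fin.append_right] at h
  · simpa using h
  · exact absurd (h ▸ orderEmbOfFin_mem A hA _) (mem_compl.1 (orderEmbOfFin_mem Aᶜ _ _))
  · exact absurd (h ▸ orderEmbOfFin_mem A hA _) (mem_compl.1 (orderEmbOfFin_mem Aᶜ _ _))
  · simpa using h

noncomputable def shuffle (A : Finset (Fin (p + q))) (hA : #A = p) (α : Perm (Fin p))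
    (β : Perm (Fin q)) : Perm (Fin (p + q)) :=
  .ofBijective _ (Finite.injective_iff_bijective.1 (shuffleFun_injective A hA α β))

variable (A : Finset (Fin (p + q))) (hA : #A = p) (α : Perm (Fin p)) (β : Perm (Fin q))

theorem shuffle_castAdd (j : Fin p) :
    shuffle A hA α β (Fin.castAdd q j) = A.orderEmbOfFin hA (α j) := by
  simp [shuffle, shuffleFun]

theorem shuffle_natAdd (j : Fin q) :
    shuffle A hA α β (Fin.natAdd p j) = Aᶜ.orderEmbOfFin (card_compl_of_card_eq hA) (β j) := by
  simp [shuffle, shuffleFun]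

theorem range_shuffle_castAdd : Set.range (fun j => shuffle A hA α β (Fin.castAdd q j)) = A := by
  simp_rw [shuffle_castAdd]
  exact (α.surjective.range_comp (A.orderEmbOfFin hA)).trans (range_orderEmbOfFin A hA)

theorem shuffle_bijective :
    Function.Bijective
      fun x : (Perm (Fin p) × Perm (Fin q)) × {A : Finset (Fin (p + q)) // #A = p} =>
        shuffle x.2.1 x.2.2 x.1.1 x.1.2 := by
  rw [Fintype.bijective_iff_injective_and_card]
  refine ⟨?_, ?_⟩
  · rintro ⟨⟨α, β⟩, A, hA⟩ ⟨⟨α', β'⟩, A', hA'⟩ h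
    obtain rfl : A = A' := by
      simpa using (range_shuffle_castAdd A hA α β).symm.trans
        ((congrArg _ (funext fun j => DFunLike.congr_fun h (Fin.castAdd q j))).trans
          (range_shuffle_castAdd A' hA' α' β'))
    have hα : α = α' := Equiv.ext fun j => (A.orderEmbOfFin hA).injective <| by
      simpa [shuffle_castAdd] using DFunLike.congr_fun h (Fin.castAdd q j)
    have hβ : β = β' :=
      Equiv.ext fun j => (Aᶜ.orderEmbOfFin (card_compl_of_card_eq hA)).injective <| by
      simpa [shuffle_natAdd] using DFunLike.congr_fun h (Fin.natAdd p j)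
    rw [hα, hβ]
  · simp only [Fintype.card_prod, Fintype.card_perm, Fintype.card_finset_len, Fintype.card_fin]
    rw [← Nat.choose_mul_factorial_mul_factorial (Nat.le_add_right p q), Nat.add_sub_cancel_left]
    ring

theorem isPeak_shuffle_iff_left {i : ℕ} (hi : i < p) :
    IsPeak (shuffle A hA α β) i ↔ IsPeak α i := by
  by_cases h2 : 2 ≤ i
  · simpa using isPeak_add_iff_of_strictMono (d := 0) (A.orderEmbOfFin hA).strictMono (by omega)
      (fun j => by simp only [zero_add]; exact shuffle_castAdd A hA α β j) h2 hi
  · exact iff_of_false (fun h => h2 h.two_le) (fun h => h2 h.two_le)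

theorem isPeak_shuffle_iff_right {i : ℕ} (hi : 2 ≤ i) :
    IsPeak (shuffle A hA α β) (p + i) ↔ IsPeak β i := by
  by_cases hiq : i < q
  · exact isPeak_add_iff_of_strictMono (Aᶜ.orderEmbOfFin _).strictMono le_rfl
      (shuffle_natAdd A hA α β) hi hiq
  · exact iff_of_false (fun h => by have := h.lt; omega) (fun h => hiq h.lt)

/-- The boundary positions `p` and `p + 1` cannot be peaks, being adjacent to the peaks `p - 1`
and `p + 2`; so the peak set of a shuffle is determined by those of its two blocks. -/
theorem peakSet_shuffle_eq_iff {SL SR : Finset ℕ} (hSL : ∀ x ∈ SL, x < p)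
    (hSL_last : p = 1 ∨ p - 1 ∈ SL) (hSR : ∀ x ∈ SR, 2 ≤ x) (hSR_first : 2 ∈ SR) :
    peakSet (shuffle A hA α β) = SL ∪ SR.image (p + ·) ↔ peakSet α = SL ∧ peakSet β = SR := by
  have hleft : ∀ x < p, x ∈ SL ∪ SR.image (p + ·) ↔ x ∈ SL := fun x hx => by
    simp only [mem_union, mem_image, or_iff_left_iff_imp]
    rintro ⟨y, -, rfl⟩
    omega
  have hright : ∀ i, p + i ∈ SL ∪ SR.image (p + ·) ↔ i ∈ SR := fun i => by
    rw [mem_union, (add_right_injective p).mem_finset_image, or_iff_right_iff_imp]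
    intro h
    have := hSL _ h
    omega
  constructor
  · intro h
    constructor
    · ext i
      by_cases hi : i < p
      · rw [mem_peakSet, ← isPeak_shuffle_iff_left A hA α β hi, ← mem_peakSet, h, hleft i hi]
      · exact iff_of_false (fun h' => hi (mem_peakSet.1 h').lt) (fun h' => hi (hSL i h'))
    · ext i
      by_cases hi : 2 ≤ i
      · rw [mem_peakSet, ← isPeak_shuffle_iff_right A hA α β hi, ← mem_peakSet, h, hright]
      · exact iff_of_false (fun h' => hi (mem_peakSet.1 h').two_le) (fun h' => hi (hSR i h'))
  · rintro ⟨hα, hβ⟩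
    ext x
    rw [mem_peakSet]
    rcases lt_or_ge x p with hx | hx
    · rw [isPeak_shuffle_iff_left A hA α β hx, ← mem_peakSet, hα, hleft x hx]
    obtain ⟨i, rfl⟩ := Nat.exists_eq_add_of_le hx
    obtain hi | rfl | rfl : 2 ≤ i ∨ i = 0 ∨ i = 1 := by omega
    · rw [isPeak_shuffle_iff_right A hA α β hi, ← mem_peakSet, hβ, hright]
    · refine iff_of_false ?_ (fun h => by have := hSR 0 ((hright 0).1 h); omega)
      rcases hSL_last with hp | hp
      · exact fun h => by have := h.two_le; omega
      · have hp1 := hSL _ hp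
        have hpeak : IsPeak (shuffle A hA α β) (p - 1) :=
          (isPeak_shuffle_iff_left A hA α β (by omega)).2 (mem_peakSet.1 (hα ▸ hp))
        simpa [Nat.sub_add_cancel (show 1 ≤ p by omega)] using hpeak.not_isPeak_add_one
    · refine iff_of_false ?_ (fun h => by have := hSR 1 ((hright 1).1 h); omega)
      have hpeak : IsPeak (shuffle A hA α β) (p + 2) :=
        (isPeak_shuffle_iff_right A hA α β le_rfl).2 (mem_peakSet.1 (hβ ▸ hSR_first))
      exact fun h => h.not_isPeak_add_one hpeak

end Shuffle

/-- Choosing the set of values taken on the first `p` positions, together with the two relative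
orders, gives the factor `(p + q).choose p`. -/
theorem numPeakSet_add {p q : ℕ} {SL SR : Finset ℕ} (hSL : ∀ x ∈ SL, x < p)
    (hSL_last : p = 1 ∨ p - 1 ∈ SL) (hSR : ∀ x ∈ SR, 2 ≤ x) (hSR_first : 2 ∈ SR) :
    numPeakSet (p + q) (SL ∪ SR.image (p + ·)) =
      (p + q).choose p * numPeakSet p SL * numPeakSet q SR := by
  let e := Equiv.ofBijective _ (shuffle_bijective (p := p) (q := q))
  have hsplit : {σ : Perm (Fin (p + q)) // peakSet σ = SL ∪ SR.image (p + ·)} ≃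
      ({α : Perm (Fin p) // peakSet α = SL} × {β : Perm (Fin q) // peakSet β = SR}) ×
        {A : Finset (Fin (p + q)) // #A = p} :=
    (e.subtypeEquiv fun x =>
        (peakSet_shuffle_eq_iff _ x.2.2 _ _ hSL hSL_last hSR hSR_first).symm).symm.trans <|
      prodSubtypeFstEquivSubtypeProd.trans (subtypeProdEquivProd.prodCongr (.refl _))
  rw [numPeakSet, Nat.card_congr hsplit, Nat.card_prod, Nat.card_prod, Nat.card_eq_fintype_card
    (α := {A : Finset (Fin (p + q)) // #A = p}), Fintype.card_finset_len, Fintype.card_fin,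
    numPeakSet, numPeakSet]
  ring

theorem compPeaks_cons (x : ℕ) {l : List ℕ} (hl : l ≠ []) :
    compPeaks (x :: l) = insert x ((compPeaks l).image (x + ·)) := by
  obtain ⟨m, hm⟩ : ∃ m, l.length = m + 1 :=
    ⟨l.length - 1, by have := List.length_pos_iff.2 hl; omega⟩
  simp only [compPeaks, List.take_succ_cons, List.sum_cons, List.length_cons, hm,
    add_tsub_cancel_right, range_add_one', map_eq_image, image_insert, List.take_zero, List.sum_nil,
    add_zero, image_image, Function.comp_def]
  rfl

theorem compPeaks_append_three (a : List ℕ) {b : List ℕ} (hb : b ≠ []) :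
    compPeaks (a ++ 3 :: b) =
      compPeaks (a ++ [1]) ∪ (compPeaks (2 :: b)).image (a.sum + 1 + ·) := by
  induction a with
  | nil =>
    have h1 : compPeaks [1] = ∅ := rfl
    rw [List.nil_append, compPeaks_cons _ hb, compPeaks_cons _ hb, List.nil_append, h1]
    simp [image_insert, image_image, Function.comp_def, ← add_assoc]
  | cons x a ih =>
    rw [List.cons_append, compPeaks_cons x (l := a ++ 3 :: b) (by simp), ih, List.cons_append,
      compPeaks_cons x (l := a ++ [1]) (by simp)]
    simp [image_union, image_image, insert_union, Function.comp_def, add_assoc]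

theorem lt_sum_of_mem_compPeaks {l : List ℕ} (hl : ∀ x ∈ l, 0 < x) {x : ℕ}
    (hx : x ∈ compPeaks l) : x < l.sum := by
  induction l generalizing x with
  | nil => simp [compPeaks] at hx
  | cons y l ih =>
    rcases eq_or_ne l [] with rfl | hl0
    · simp [compPeaks] at hx
    have hpos : 0 < l.sum := List.sum_pos l (fun z hz => hl z (by simp [hz])) hl0
    rw [compPeaks_cons y hl0, mem_insert, mem_image] at hx
    rcases hx with rfl | ⟨x', hx', rfl⟩
    · simpa using hpos
    · simpa using ih (fun z hz => hl z (by simp [hz])) hx'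

theorem sum_mem_compPeaks_append {a l : List ℕ} (ha : a ≠ []) (hl : l ≠ []) :
    a.sum ∈ compPeaks (a ++ l) := by
  induction a with
  | nil => exact absurd rfl ha
  | cons x a ih =>
    rw [List.cons_append, compPeaks_cons _ (by simp [hl])]
    rcases eq_or_ne a [] with rfl | ha0
    · simp
    · simpa using Or.inr (ih ha0)

noncomputable def peakProb (c : List ℕ) : ℚ :=
  Pcomp c / c.sum.factorial

theorem peakProb_append_three {a b : List ℕ} (ha : ∀ x ∈ a, 0 < x) (hb0 : b ≠ []) :
    peakProb (a ++ 3 :: b) = peakProb (a ++ [1]) * peakProb (2 :: b) := by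
  have hSL : ∀ x ∈ compPeaks (a ++ [1]), x < a.sum + 1 := fun x hx => by
    simpa using lt_sum_of_mem_compPeaks (by simpa [or_imp, forall_and] using ha) hx
  have hSL_last : a.sum + 1 = 1 ∨ a.sum + 1 - 1 ∈ compPeaks (a ++ [1]) := by
    rcases eq_or_ne a [] with rfl | ha0
    · simp
    · exact Or.inr (by simpa using sum_mem_compPeaks_append ha0 (List.cons_ne_nil 1 []))
  have hSR : ∀ x ∈ compPeaks (2 :: b), 2 ≤ x := fun x hx => by
    rw [compPeaks_cons 2 hb0, mem_insert, mem_image] at hx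
    rcases hx with rfl | ⟨y, -, rfl⟩ <;> omega
  have hSR_first : 2 ∈ compPeaks (2 :: b) := by simp [compPeaks_cons 2 hb0]
  have hsplit := numPeakSet_add (q := b.sum + 2) hSL hSL_last hSR hSR_first
  have hsum : (a ++ 3 :: b).sum = (a.sum + 1) + (b.sum + 2) := by simp; omega
  have hsumL : (a ++ [1]).sum = a.sum + 1 := by simp
  have hsumR : (2 :: b).sum = b.sum + 2 := by simp [add_comm]
  rw [peakProb, peakProb, peakProb, Pcomp, Pcomp, Pcomp, compPeaks_append_three a hb0, hsum,
    hsumL, hsumR, hsplit, Nat.cast_mul, Nat.cast_mul, Nat.cast_add_choose]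
  field_simp

theorem chain3_congr {c d : ℕ → List ℕ} {k : ℕ} (h : ∀ i ≤ k, c i = d i) :
    chain3 c k = chain3 d k := by
  induction k with
  | zero => exact h 0 le_rfl
  | succ k ih => rw [chain3, chain3, ih fun i hi => h i (by omega), h (k + 1) le_rfl]

theorem chain3_append (c : ℕ → List ℕ) (k : ℕ) (l : List ℕ) :
    chain3 c k ++ l = chain3 (Function.update c k (c k ++ l)) k := by
  cases k with
  | zero => simp [chain3]
  | succ k =>
    rw [chain3, chain3, chain3_congr (c := Function.update c (k + 1) _) (d := c)
      fun i hi => Function.update_of_ne (show i ≠ k + 1 by omega) _ _]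
    simp

theorem pos_of_mem_chain3 {c : ℕ → List ℕ} {k : ℕ} (hpos : ∀ i ≤ k, ∀ x ∈ c i, 0 < x) :
    ∀ x ∈ chain3 c k, 0 < x := by
  induction k with
  | zero => exact hpos 0 le_rfl
  | succ k ih =>
    simp only [chain3, List.mem_append, List.mem_singleton]
    rintro x ((hx | rfl) | hx)
    · exact ih (fun i hi => hpos i (by omega)) x hx
    · norm_num
    · exact hpos (k + 1) le_rfl x hx

theorem sum_chain3 (c : ℕ → List ℕ) (k : ℕ) :
    (chain3 c k).sum = 3 * k + ∑ i ∈ range (k + 1), (c i).sum := by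
  induction k with
  | zero => simp [chain3]
  | succ k ih =>
    rw [chain3, List.sum_append, List.sum_append, ih, sum_range_succ _ (k + 1), List.sum_singleton]
    ring

theorem peakProb_chain3 {k : ℕ} (hk : 1 ≤ k) {c : ℕ → List ℕ} (hpos : ∀ i < k, ∀ x ∈ c i, 0 < x)
    (hck : c k ≠ []) :
    peakProb (chain3 c k) = peakProb (c 0 ++ [1]) *
      (∏ i ∈ Ioo 0 k, peakProb (2 :: (c i ++ [1]))) * peakProb (2 :: c k) := by
  induction k, hk using Nat.le_induction generalizing c with
  | base =>
    rw [chain3, chain3, List.append_assoc, List.singleton_append,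
      peakProb_append_three (hpos 0 one_pos) hck, show Ioo 0 1 = ∅ from rfl, prod_empty, mul_one]
  | succ k hk ih =>
    have hpos' : ∀ i ≤ k, ∀ x ∈ c i, 0 < x := fun i hi => hpos i (by omega)
    rw [chain3, List.append_assoc, List.singleton_append,
      peakProb_append_three (pos_of_mem_chain3 hpos') hck, chain3_append,
      ih (fun i hi => by simpa [Function.update_of_ne hi.ne] using hpos' i hi.le) (by simp),
      Function.update_self, Function.update_of_ne (by omega : 0 ≠ k),
      prod_congr rfl fun i hi => by rw [Function.update_of_ne (mem_Ioo.1 hi).2.ne],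
      Ioo_add_one_right_eq_Ioc, ← Ioo_insert_right hk, prod_insert right_notMem_Ioo]
    ring

theorem Pcomp_eq_of_peakProb_eq {a b : List ℕ} (hsum : a.sum = b.sum)
    (h : peakProb a = peakProb b) : Pcomp a = Pcomp b := by
  rw [peakProb, peakProb, hsum, div_left_inj' (by positivity)] at h
  exact_mod_cast h

theorem invariance_middle_factors (k : ℕ) (hk : 1 ≤ k) (c : ℕ → List ℕ)
    (hpos : ∀ i ≤ k, ∀ x ∈ c i, 0 < x) (hck : c k ≠ [])
    (τ : Equiv.Perm ℕ) (hτ : ∀ i, ¬(0 < i ∧ i < k) → τ i = i) :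
    Pcomp (chain3 c k) = Pcomp (chain3 (fun i => c (τ i)) k) := by
  have hsupp : {i | τ i ≠ i} ⊆ Ioo 0 k := fun i hi => mem_Ioo.2 (not_not.1 (mt (hτ i) hi))
  have hτk : τ k = k := hτ k (by omega)
  have hτ_lt : ∀ i < k, τ i < k := fun i hi => by
    by_cases h : τ i = i
    · omega
    · exact (mem_Ioo.1 (hsupp (τ.injective.ne h))).2
  refine Pcomp_eq_of_peakProb_eq ?_ ?_
  · rw [sum_chain3, sum_chain3, τ.sum_comp _ (fun i => (c i).sum)
      (hsupp.trans fun i hi => by simp at hi ⊢; omega)]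
  · rw [peakProb_chain3 hk (fun i hi => hpos i hi.le) hck,
      peakProb_chain3 hk (fun i hi => hpos _ (hτ_lt i hi).le) (by rwa [hτk]), hτ 0 (by omega), hτk,
      τ.prod_comp _ (fun i => peakProb (2 :: (c i ++ [1]))) hsupp]
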